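/- arXiv:2201.03452 — 3 statements merged into one kernel-verified Lean document; each statement's English description precedes it below -/
import Mathlib

section
/- Let d(n) denote the GF(2)-dimension of the kernel of the Lights Out map of the n × n grid graph. Then for all natural numbers n ≥ 1 and k ≥ 1, d(nk − 1) ≥ d(n − 1). -/
/-!
Extend a null pattern `x` of the `s × s` grid by zero to `ℤ²`; it vanishes on the lines `-1` and
`s`. Folding the plane onto `[-1, s]²` by the reflections in these lines turns `x` into a doubly
periodic pattern that the Lights Out operator of `ℤ²` annihilates everywhere: off the mirror lines
the fold maps the four neighbours of a point onto the four neighbours of its image, and at a point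
of a mirror line the pattern is zero while its two neighbours across the line are equal and cancel
over GF(2). If `s + 1 ∣ m + 1` the lines `-1` and
`m` are mirror lines, so the restriction to the `m × m` grid is a null pattern of that grid; it
contains `x` in its corner, so this linear map is injective and `d(s) ≤ d(m)`.
-/

/-- The Lights Out map of a finite simple graph `G`:
`Φ_G(x)(v) = x(v) + Σ_{u ~ v} x(u)` over GF(2), as a GF(2)-linear map. -/
def lightsOut {V : Type*} [Fintype V] (G : SimpleGraph V) [DecidableRel G.Adj] :
    (V → ZMod 2) →ₗ[ZMod 2] (V → ZMod 2) where
  toFun x := fun v => x v + ∑ u ∈ G.neighborFinset v, x u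
  map_add' x y := by
    funext v
    simp [Finset.sum_add_distrib]
    ring
  map_smul' c x := by
    funext v
    simp [Finset.mul_sum, mul_add]

/-- The Hamming weight of a GF(2) vector: the number of coordinates equal to 1. -/
def hammingWeight {V : Type*} [Fintype V] (x : V → ZMod 2) : ℕ :=
  (Finset.univ.filter fun v => x v = 1).card

/-- The `n × n` grid graph on `Fin n × Fin n`: two vertices are adjacent when they
agree in one coordinate and differ by exactly 1 in the other. -/
def gridGraph (n : ℕ) : SimpleGraph (Fin n × Fin n) where
  Adj a b := (a.1 = b.1 ∧ (a.2.val + 1 = b.2.val ∨ b.2.val + 1 = a.2.val)) ∨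
             (a.2 = b.2 ∧ (a.1.val + 1 = b.1.val ∨ b.1.val + 1 = a.1.val))
  symm := by
    constructor
    rintro a b (⟨h1, h2⟩ | ⟨h1, h2⟩)
    · exact Or.inl ⟨h1.symm, h2.symm⟩
    · exact Or.inr ⟨h1.symm, h2.symm⟩
  loopless := by
    constructor
    rintro a (⟨_, h | h⟩ | ⟨_, h | h⟩) <;> omega

instance (n : ℕ) : DecidableRel (gridGraph n).Adj := fun a b => by
  unfold gridGraph
  exact inferInstanceAs (Decidable (_ ∨ _))

/-- `d n`: the GF(2)-dimension of the kernel of the Lights Out map of the `n × n` grid. -/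
noncomputable def gridNullity (n : ℕ) : ℕ :=
  Module.finrank (ZMod 2) (LinearMap.ker (lightsOut (gridGraph n)))

section ZeroExtension

variable {m : ℕ}

def gridEmbed (m : ℕ) : Fin m × Fin m → ℤ × ℤ :=
  Prod.map (fun a => (a : ℤ)) (fun a => (a : ℤ))

theorem gridEmbed_injective : Function.Injective (gridEmbed m) :=
  (Nat.cast_injective.comp Fin.val_injective).prodMap (Nat.cast_injective.comp Fin.val_injective)

theorem exists_gridEmbed_eq_iff {p : ℤ × ℤ} :
    (∃ a, gridEmbed m a = p) ↔ p.1 ∈ Set.Ico 0 (m : ℤ) ∧ p.2 ∈ Set.Ico 0 (m : ℤ) := by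
  constructor
  · rintro ⟨⟨a, b⟩, rfl⟩
    simp [gridEmbed]
  · rintro ⟨⟨hi0, him⟩, hj0, hjm⟩
    refine ⟨(⟨p.1.toNat, by omega⟩, ⟨p.2.toNat, by omega⟩), ?_⟩
    ext <;> simp [gridEmbed, hi0, hj0]

noncomputable def zeroExt (m : ℕ) : (Fin m × Fin m → ZMod 2) →ₗ[ZMod 2] ℤ × ℤ → ZMod 2 :=
  Function.ExtendByZero.linearMap (ZMod 2) (gridEmbed m)

@[simp]
theorem zeroExt_gridEmbed (x : Fin m × Fin m → ZMod 2) (a : Fin m × Fin m) :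
    zeroExt m x (gridEmbed m a) = x a :=
  gridEmbed_injective.extend_apply x 0 a

theorem zeroExt_eq_zero_of_fst_notMem (x : Fin m × Fin m → ZMod 2) {i : ℤ}
    (hi : i ∉ Set.Ico 0 (m : ℤ)) (j : ℤ) : zeroExt m x (i, j) = 0 :=
  Function.extend_apply' _ _ _ (exists_gridEmbed_eq_iff.not.2 fun h => hi h.1)

theorem zeroExt_eq_zero_of_snd_notMem (x : Fin m × Fin m → ZMod 2) (i : ℤ) {j : ℤ}
    (hj : j ∉ Set.Ico 0 (m : ℤ)) : zeroExt m x (i, j) = 0 :=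
  Function.extend_apply' _ _ _ (exists_gridEmbed_eq_iff.not.2 fun h => hj h.2)

theorem Function.Injective.sum_ite_eq_extend {α β M : Type*} [Fintype α] [DecidableEq β]
    [AddCommMonoid M] {f : α → β} (hf : Function.Injective f) (x : α → M) (b : β) :
    ∑ a, (if f a = b then x a else 0) = Function.extend f x 0 b := by
  classical
  by_cases hb : ∃ a, f a = b
  · obtain ⟨a, rfl⟩ := hb
    simp [hf.eq_iff, hf.extend_apply]
  · rw [Function.extend_apply' _ _ _ hb, Pi.zero_apply]
    exact Finset.sum_eq_zero fun a _ => if_neg fun h => hb ⟨a, h⟩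

end ZeroExtension

section PlaneLightsOut

def latticeSteps : Finset (ℤ × ℤ) := {(-1, 0), (1, 0), (0, -1), (0, 1)}

def planeLightsOut (f : ℤ × ℤ → ZMod 2) (p : ℤ × ℤ) : ZMod 2 :=
  f p + ∑ d ∈ latticeSteps, f (p + d)

theorem planeLightsOut_apply (f : ℤ × ℤ → ZMod 2) (i j : ℤ) :
    planeLightsOut f (i, j) =
      f (i, j) + (f (i - 1, j) + f (i + 1, j)) + (f (i, j - 1) + f (i, j + 1)) := by
  rw [planeLightsOut, latticeSteps, Finset.sum_insert (by decide), Finset.sum_insert (by decide),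
    Finset.sum_pair (by decide)]
  simp only [Prod.mk_add_mk, add_zero, ← sub_eq_add_neg]
  ring

variable {m : ℕ}

theorem gridGraph_adj_iff {a b : Fin m × Fin m} :
    (gridGraph m).Adj a b ↔ gridEmbed m b - gridEmbed m a ∈ latticeSteps := by
  obtain ⟨⟨a₁, ha₁⟩, ⟨a₂, ha₂⟩⟩ := a
  obtain ⟨⟨b₁, hb₁⟩, ⟨b₂, hb₂⟩⟩ := b
  simp only [gridGraph, gridEmbed, latticeSteps, Fin.mk.injEq, Prod.map_apply, Prod.mk_sub_mk,
    Finset.mem_insert, Finset.mem_singleton, Prod.mk.injEq]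
  omega

theorem lightsOut_gridGraph_apply (x : Fin m × Fin m → ZMod 2) (a : Fin m × Fin m) :
    lightsOut (gridGraph m) x a = planeLightsOut (zeroExt m x) (gridEmbed m a) := by
  classical
  have hnbr : ∑ u ∈ (gridGraph m).neighborFinset a, x u =
      ∑ d ∈ latticeSteps, zeroExt m x (gridEmbed m a + d) := by
    calc ∑ u ∈ (gridGraph m).neighborFinset a, x u
        = ∑ u, ∑ d ∈ latticeSteps, if gridEmbed m u = gridEmbed m a + d then x u else 0 := by
          rw [SimpleGraph.neighborFinset_eq_filter, Finset.sum_filter]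
          refine Finset.sum_congr rfl fun u _ => ?_
          simp_rw [gridGraph_adj_iff, ← sub_eq_iff_eq_add', Finset.sum_ite_eq]
      _ = ∑ d ∈ latticeSteps, zeroExt m x (gridEmbed m a + d) := by
          rw [Finset.sum_comm]
          exact Finset.sum_congr rfl fun d _ => gridEmbed_injective.sum_ite_eq_extend x _
  simp [lightsOut, planeLightsOut, hnbr]

end PlaneLightsOut

section Zigzag

variable (s : ℕ)

/-- The triangle wave of period `2 (s + 1)` that is the identity on `[-1, s]`, i.e. the map
folding `ℤ` onto `[-1, s]` by the reflections in `-1` and in `s`. -/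
def zigzag (i : ℤ) : ℤ :=
  min ((i + 1) % (2 * (s + 1)) - 1) (2 * s + 1 - (i + 1) % (2 * (s + 1)))

variable {s}

theorem zigzag_of_mem_Icc {i : ℤ} (hi : i ∈ Set.Icc (-1) (s : ℤ)) : zigzag s i = i := by
  obtain ⟨h₀, h₁⟩ := hi
  rw [zigzag, Int.emod_eq_of_lt (by omega) (by omega)]
  omega

theorem zigzag_notMem_Ico_of_dvd {i : ℤ} (hi : (s + 1 : ℤ) ∣ i + 1) :
    zigzag s i ∉ Set.Ico 0 (s : ℤ) := by
  obtain ⟨c, hc⟩ := hi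
  obtain ⟨q, rfl | rfl⟩ := Int.even_or_odd' c
  · rw [zigzag, hc, show (s + 1 : ℤ) * (2 * q) = 2 * (s + 1) * q by ring, Int.mul_emod_right]
    simp only [Set.mem_Ico]
    omega
  · rw [zigzag, hc, show (s + 1 : ℤ) * (2 * q + 1) = (s + 1) + 2 * (s + 1) * q by ring,
      Int.add_mul_emod_self_left, Int.emod_eq_of_lt (by omega) (by omega)]
    simp only [Set.mem_Ico]
    omega

theorem zigzag_pred_succ (i : ℤ) :
    (zigzag s i ∈ Set.Ico 0 (s : ℤ) ∧
      (zigzag s (i - 1) = zigzag s i - 1 ∧ zigzag s (i + 1) = zigzag s i + 1 ∨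
        zigzag s (i - 1) = zigzag s i + 1 ∧ zigzag s (i + 1) = zigzag s i - 1)) ∨
    (zigzag s i ∉ Set.Ico 0 (s : ℤ) ∧ zigzag s (i - 1) = zigzag s (i + 1)) := by
  simp only [zigzag, Set.mem_Ico]
  set N : ℤ := 2 * (s + 1)
  set r := (i + 1) % N
  have hr₀ : 0 ≤ r := Int.emod_nonneg _ (by omega)
  have hr₁ : r < N := Int.emod_lt_of_pos _ (by omega)
  have hsucc : (i + 1 + 1) % N = if r + 1 < N then r + 1 else 0 := by
    rw [← Int.emod_add_emod]
    split_ifs with h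
    · exact Int.emod_eq_of_lt (by omega) h
    · rw [show r + 1 = N by omega, Int.emod_self]
  have hpred : (i - 1 + 1) % N = if 0 < r then r - 1 else N - 1 := by
    rw [show i - 1 + 1 = i + 1 + -1 by ring, ← Int.emod_add_emod]
    split_ifs with h
    · exact Int.emod_eq_of_lt (by omega) (by omega)
    · rw [show r + -1 = N - 1 + N * (-1) by omega, Int.add_mul_emod_self_left,
        Int.emod_eq_of_lt (by omega) (by omega)]
  rw [hsucc, hpred]
  split_ifs <;> omega

theorem apply_zigzag_pred_add_apply_zigzag_succ (g : ℤ → ZMod 2) (i : ℤ) :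
    g (zigzag s (i - 1)) + g (zigzag s (i + 1)) =
      if zigzag s i ∈ Set.Ico 0 (s : ℤ) then g (zigzag s i - 1) + g (zigzag s i + 1) else 0 := by
  rcases zigzag_pred_succ (s := s) i with ⟨hmem, ⟨hpred, hsucc⟩ | ⟨hpred, hsucc⟩⟩ | ⟨hmem, heq⟩
  · rw [if_pos hmem, hpred, hsucc]
  · rw [if_pos hmem, hpred, hsucc, add_comm]
  · rw [if_neg hmem, heq, CharTwo.add_self_eq_zero]

end Zigzag

section Tiling

variable {s m : ℕ}

def zigzagPlane (s : ℕ) : ℤ × ℤ → ℤ × ℤ :=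
  Prod.map (zigzag s) (zigzag s)

theorem zigzagPlane_gridEmbed (a : Fin s × Fin s) :
    zigzagPlane s (gridEmbed s a) = gridEmbed s a := by
  simp only [zigzagPlane, gridEmbed, Prod.map]
  rw [zigzag_of_mem_Icc, zigzag_of_mem_Icc] <;> simp [Set.mem_Icc]

theorem planeLightsOut_zeroExt_comp_zigzagPlane {x : Fin s × Fin s → ZMod 2}
    (hx : x ∈ LinearMap.ker (lightsOut (gridGraph s))) (p : ℤ × ℤ) :
    planeLightsOut (zeroExt s x ∘ zigzagPlane s) p = 0 := by
  obtain ⟨i, j⟩ := p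
  simp only [planeLightsOut_apply, Function.comp_apply, zigzagPlane, Prod.map]
  rw [apply_zigzag_pred_add_apply_zigzag_succ (fun t => zeroExt s x (t, zigzag s j)) i,
    apply_zigzag_pred_add_apply_zigzag_succ (fun t => zeroExt s x (zigzag s i, t)) j]
  split_ifs with hi hj hj
  · obtain ⟨c, hc⟩ := (exists_gridEmbed_eq_iff (p := (zigzag s i, zigzag s j))).2 ⟨hi, hj⟩
    have := congrFun (LinearMap.mem_ker.1 hx) c
    rwa [lightsOut_gridGraph_apply, hc, planeLightsOut_apply] at this
  · simp [zeroExt_eq_zero_of_snd_notMem x _ hj]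
  all_goals simp [zeroExt_eq_zero_of_fst_notMem x hi]

noncomputable def tile (s m : ℕ) : (Fin s × Fin s → ZMod 2) →ₗ[ZMod 2] Fin m × Fin m → ZMod 2 :=
  LinearMap.funLeft (ZMod 2) (ZMod 2) (zigzagPlane s ∘ gridEmbed m) ∘ₗ zeroExt s

theorem tile_apply (x : Fin s × Fin s → ZMod 2) (a : Fin m × Fin m) :
    tile s m x a = zeroExt s x (zigzagPlane s (gridEmbed m a)) :=
  rfl

theorem tile_injective (h : s ≤ m) : Function.Injective (tile s m) := by
  have hrestrict : ∀ z a, tile s m z (Prod.map (Fin.castLE h) (Fin.castLE h) a) = z a := by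
    intro z a
    change zeroExt s z (zigzagPlane s (gridEmbed s a)) = z a
    rw [zigzagPlane_gridEmbed, zeroExt_gridEmbed]
  intro x y hxy
  ext a
  rw [← hrestrict x, ← hrestrict y, hxy]

theorem zeroExt_tile (h : s + 1 ∣ m + 1) (x : Fin s × Fin s → ZMod 2) {i j : ℤ}
    (hi : i ∈ Set.Icc (-1) (m : ℤ)) (hj : j ∈ Set.Icc (-1) (m : ℤ)) :
    zeroExt m (tile s m x) (i, j) = zeroExt s x (zigzagPlane s (i, j)) := by
  have hdvd : ∀ t ∈ Set.Icc (-1) (m : ℤ), t ∉ Set.Ico 0 (m : ℤ) → (s + 1 : ℤ) ∣ t + 1 := by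
    intro t ht ht'
    obtain rfl | rfl : t = -1 ∨ t = m := by
      simp only [Set.mem_Icc, Set.mem_Ico] at ht ht'
      omega
    · simp
    · exact_mod_cast h
  by_cases hin : ∃ a, gridEmbed m a = (i, j)
  · obtain ⟨a, ha⟩ := hin
    rw [← ha, zeroExt_gridEmbed, tile_apply]
  rw [exists_gridEmbed_eq_iff, not_and_or] at hin
  rcases hin with hi' | hj'
  · rw [zeroExt_eq_zero_of_fst_notMem _ hi', zigzagPlane, Prod.map,
      zeroExt_eq_zero_of_fst_notMem _ (zigzag_notMem_Ico_of_dvd (hdvd i hi hi'))]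
  · rw [zeroExt_eq_zero_of_snd_notMem _ _ hj', zigzagPlane, Prod.map,
      zeroExt_eq_zero_of_snd_notMem _ _ (zigzag_notMem_Ico_of_dvd (hdvd j hj hj'))]

theorem tile_mem_ker (h : s + 1 ∣ m + 1) {x : Fin s × Fin s → ZMod 2}
    (hx : x ∈ LinearMap.ker (lightsOut (gridGraph s))) :
    tile s m x ∈ LinearMap.ker (lightsOut (gridGraph m)) := by
  rw [LinearMap.mem_ker]
  ext ⟨⟨i, hi⟩, ⟨j, hj⟩⟩
  rw [lightsOut_gridGraph_apply, Pi.zero_apply,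
    ← planeLightsOut_zeroExt_comp_zigzagPlane hx (gridEmbed m (⟨i, hi⟩, ⟨j, hj⟩))]
  simp only [gridEmbed, Prod.map, planeLightsOut_apply, Function.comp_apply]
  simp (disch := simp only [Set.mem_Icc]; omega) only [zeroExt_tile h x]

theorem gridNullity_le_of_dvd (h : s + 1 ∣ m + 1) : gridNullity s ≤ gridNullity m := by
  have hsm : s ≤ m := by have := Nat.le_of_dvd (Nat.succ_pos m) h; omega
  refine LinearMap.finrank_le_finrank_of_injective
    (f := (tile s m).restrict fun _ hx => tile_mem_ker h hx) ?_
  rw [LinearMap.injective_restrict_iff, LinearMap.ker_eq_bot.2 (tile_injective hsm)]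
  exact disjoint_bot_right

end Tiling

theorem gridNullity_tiling_general (n k : ℕ) (hk : 1 ≤ k) :
    gridNullity (n - 1) ≤ gridNullity (n * k - 1) := by
  rcases n with _ | s
  · simp
  · rw [Nat.add_sub_cancel]
    apply gridNullity_le_of_dvd
    rw [Nat.sub_add_cancel (Nat.one_le_iff_ne_zero.2 (by positivity))]
    exact dvd_mul_right _ _

/-- For all `n, k ≥ 1`, `d(nk − 1) ≥ d(n − 1)`. -/
theorem gridNullity_tiling (n k : ℕ) (hn : 1 ≤ n) (hk : 1 ≤ k) :
    gridNullity (n - 1) ≤ gridNullity (n * k - 1) :=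
  gridNullity_tiling_general n k hk
end

section
/- For every natural number k ≥ 1, the nullity of the (6k − 1) × (6k − 1) grid graph is at least 2; that is, d(6k − 1) ≥ 2. -/
/-!
Over GF(2) the Lights Out map is `1 + A` with `A` the adjacency matrix, and the grid is the box
product of two paths, whose adjacency matrix acts on `a ⊗ b` as `A a ⊗ b + a ⊗ A b`. So if `a` and
`b` are eigenvectors of the path with eigenvalues `c + d = 1`, then `a ⊗ b` is in the kernel.
When `n ≡ 5 (mod 6)` the path on `n` vertices has the eigenvector `1, 1, 0, 1, 1, 0, …` for the
eigenvalue `1` (as `n ≡ 2 (mod 3)`) and `1, 0, 1, 0, …` for the eigenvalue `0` (as `n` is odd);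
the two products `f ⊗ g` and `g ⊗ f` are independent, as their values at `(1, 0)` and `(0, 1)`
show.
-/

open SimpleGraph Matrix Finset

namespace SimpleGraph

variable {V W R : Type*} [Fintype V] [Fintype W]

theorem adjMatrix_boxProd_mulVec_mul [CommSemiring R] (G : SimpleGraph V) (H : SimpleGraph W)
    [DecidableRel G.Adj] [DecidableRel H.Adj] [DecidableRel (G □ H).Adj] {a : V → R} {b : W → R}
    {c d : R} (ha : G.adjMatrix R *ᵥ a = c • a) (hb : H.adjMatrix R *ᵥ b = d • b) :
    (G □ H).adjMatrix R *ᵥ (fun x => a x.1 * b x.2) = (c + d) • fun x => a x.1 * b x.2 := by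
  ext ⟨v, w⟩
  have hav := congrFun ha v
  have hbw := congrFun hb w
  simp only [adjMatrix_mulVec_apply, Pi.smul_apply, smul_eq_mul] at hav hbw ⊢
  simp only [neighborFinset_boxProd, sum_disjUnion, sum_product, sum_singleton]
  rw [← sum_mul, ← mul_sum, hav, hbw]
  ring

/-- The boundary conditions say that `s`, extended by `s (-1) = 0`, vanishes just outside
the path, so the recurrence holds at its end vertices too. -/
theorem pathGraph_adjMatrix_mulVec_eq_smul [Semiring R] {n : ℕ} [DecidableRel (pathGraph n).Adj]
    {s : ℕ → R} {c : R} (h0 : s 1 = c * s 0) (hrec : ∀ i, s (i + 2) + s i = c * s (i + 1))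
    (hn : s n = 0) :
    (pathGraph n).adjMatrix R *ᵥ (fun i : Fin n => s i) = c • fun i : Fin n => s i := by
  ext ⟨i, hi⟩
  have hsplit : ∀ u, (if i + 1 = u ∨ u + 1 = i then s u else 0) =
      (if i + 1 = u then s u else 0) + if u + 1 = i then s u else 0 := by
    intro u
    split_ifs <;> first | omega | simp
  have hnext : (if i + 1 ∈ range n then s (i + 1) else 0) = s (i + 1) := by
    split_ifs with h
    · rfl
    · rw [show i + 1 = n by rw [mem_range] at h; omega, hn]
  simp only [adjMatrix_mulVec_apply, neighborFinset_eq_filter, sum_filter, pathGraph_adj,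
    Pi.smul_apply, smul_eq_mul]
  rw [Fin.sum_univ_eq_sum_range (fun u => if i + 1 = u ∨ u + 1 = i then s u else 0),
    sum_congr rfl fun u _ => hsplit u, sum_add_distrib, sum_ite_eq, hnext]
  cases i with
  | zero => simp [h0]
  | succ m =>
    simp only [add_left_inj, sum_ite_eq', mem_range, show m < n by omega, if_true]
    exact hrec m

end SimpleGraph

section LightsOut

variable {V W : Type*} [Fintype V] [Fintype W]

theorem lightsOut_congr {G H : SimpleGraph V} [DecidableRel G.Adj] [DecidableRel H.Adj]
    (h : G = H) : lightsOut G = lightsOut H := by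
  subst h
  congr

theorem lightsOut_apply (G : SimpleGraph V) [DecidableRel G.Adj] (x : V → ZMod 2) (v : V) :
    lightsOut G x v = x v + ∑ u ∈ G.neighborFinset v, x u :=
  rfl

theorem mem_ker_lightsOut_iff (G : SimpleGraph V) [DecidableRel G.Adj] (x : V → ZMod 2) :
    x ∈ LinearMap.ker (lightsOut G) ↔ G.adjMatrix (ZMod 2) *ᵥ x = x := by
  simp only [LinearMap.mem_ker, funext_iff, lightsOut_apply, adjMatrix_mulVec_apply,
    Pi.zero_apply, CharTwo.add_eq_zero]
  exact forall_congr' fun _ => eq_comm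

theorem mul_mem_ker_lightsOut_boxProd {G : SimpleGraph V} {H : SimpleGraph W}
    [DecidableRel G.Adj] [DecidableRel H.Adj] [DecidableRel (G □ H).Adj] {a : V → ZMod 2}
    {b : W → ZMod 2} {c d : ZMod 2} (ha : G.adjMatrix (ZMod 2) *ᵥ a = c • a)
    (hb : H.adjMatrix (ZMod 2) *ᵥ b = d • b) (hcd : c + d = 1) :
    (fun x : V × W => a x.1 * b x.2) ∈ LinearMap.ker (lightsOut (G □ H)) := by
  rw [mem_ker_lightsOut_iff, adjMatrix_boxProd_mulVec_mul G H ha hb, hcd, one_smul]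

end LightsOut

theorem two_le_finrank_of_apply {K ι : Type*} [Field K] [Finite ι] {U : Submodule K (ι → K)}
    {x y : ι → K} (hx : x ∈ U) (hy : y ∈ U) {i j : ι} (hxi : x i ≠ 0) (hxj : x j = 0)
    (hyi : y i = 0) (hyj : y j ≠ 0) : 2 ≤ Module.finrank K U := by
  have hind : LinearIndependent K ![(⟨x, hx⟩ : U), ⟨y, hy⟩] := by
    rw [LinearIndependent.pair_iff]
    intro s t hst
    have hi := congrArg (fun z : U => (z : ι → K) i) hst
    have hj := congrArg (fun z : U => (z : ι → K) j) hst
    simp only [Submodule.coe_add, Submodule.coe_smul, Submodule.coe_zero, Pi.add_apply,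
      Pi.smul_apply, Pi.zero_apply, smul_eq_mul, hxj, hyi, mul_zero, add_zero, zero_add] at hi hj
    exact ⟨(mul_eq_zero.1 hi).resolve_right hxi, (mul_eq_zero.1 hj).resolve_right hyj⟩
  simpa using hind.fintype_card_le_finrank

theorem gridGraph_eq_boxProd (n : ℕ) : gridGraph n = pathGraph n □ pathGraph n := by
  ext ⟨a₁, a₂⟩ ⟨b₁, b₂⟩
  simp only [gridGraph, boxProd_adj, pathGraph_adj]
  tauto

def periodThree (i : ℕ) : ZMod 2 := if i % 3 = 2 then 0 else 1

def alternating (i : ℕ) : ZMod 2 := if i % 2 = 0 then 1 else 0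

theorem pathGraph_adjMatrix_mulVec_periodThree {n : ℕ} [DecidableRel (pathGraph n).Adj]
    (hn : n % 3 = 2) :
    (pathGraph n).adjMatrix (ZMod 2) *ᵥ (fun i : Fin n => periodThree i) =
      (1 : ZMod 2) • fun i : Fin n => periodThree i := by
  refine pathGraph_adjMatrix_mulVec_eq_smul (by decide) (fun i => ?_) (by simp [periodThree, hn])
  have := Nat.mod_lt i (show 3 > 0 by norm_num)
  interval_cases hi : i % 3 <;> simp [periodThree, Nat.add_mod, hi, CharTwo.add_self_eq_zero]

theorem pathGraph_adjMatrix_mulVec_alternating {n : ℕ} [DecidableRel (pathGraph n).Adj]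
    (hn : n % 2 = 1) :
    (pathGraph n).adjMatrix (ZMod 2) *ᵥ (fun i : Fin n => alternating i) =
      (0 : ZMod 2) • fun i : Fin n => alternating i := by
  refine pathGraph_adjMatrix_mulVec_eq_smul (by decide) (fun i => ?_) (by simp [alternating, hn])
  rcases Nat.mod_two_eq_zero_or_one i with hi | hi <;>
    simp [alternating, Nat.add_mod, hi, CharTwo.add_self_eq_zero]

/-- For every `k ≥ 1`, the nullity of the `(6k − 1) × (6k − 1)` grid graph is at least 2. -/
theorem gridNullity_six_k_sub_one (k : ℕ) (hk : 1 ≤ k) :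
    2 ≤ gridNullity (6 * k - 1) := by
  classical
  set n := 6 * k - 1
  have hf := pathGraph_adjMatrix_mulVec_periodThree (n := n) (by omega)
  have hg := pathGraph_adjMatrix_mulVec_alternating (n := n) (by omega)
  have hn : 1 < n := by omega
  rw [gridNullity, lightsOut_congr (gridGraph_eq_boxProd n)]
  refine two_le_finrank_of_apply (mul_mem_ker_lightsOut_boxProd hf hg (by decide))
    (mul_mem_ker_lightsOut_boxProd hg hf (by decide)) (i := (⟨1, hn⟩, ⟨0, by omega⟩))
    (j := (⟨0, by omega⟩, ⟨1, hn⟩)) ?_ ?_ ?_ ?_ <;> simp [periodThree, alternating]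
end

section
/- Let k ≥ 1 be a natural number and suppose the kernel of the Lights Out map Φ of the (6k − 1) × (6k − 1) grid graph has GF(2)-dimension exactly 2. Then the answer to the Most Clicks Problem on this grid equals 26k² − 12k + 1: every solvable configuration has a solution of Hamming weight at most 26k² − 12k + 1, and there exists a solvable configuration whose minimum-weight solution has Hamming weight exactly 26k² − 12k + 1. -/
/-!
The kernel of the Lights Out map of the `(6k − 1)`-grid contains two 6-periodic "quiet"
patterns `A` and `B` (one the transpose of the other); they vanish on all rows and columns
`≡ 5 (mod 6)`, which cut the grid into `5 × 5` blocks, so checking them reduces to a check on the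
`6 × 6` torus. Nullity 2 forces `ker Φ = {0, A, B, A + B}`.

Upper bound: on a vertex where `A` or `B` is nonzero, exactly two of `x, x + A, x + B, x + A + B`
equal 1, so these four solutions of `Φ x = b` have total weight at most `2 (|V| + |Z|)`, where
`Z` is the common zero set of `A` and `B`; the lightest one has weight at most
`(|V| + |Z|) / 2 = ((6k − 1)² + 16k² − 12k + 1) / 2 = 26k² − 12k + 1`.

Lower bound: an explicit 6-periodic pattern `X` all four of whose translates by the kernel have
weight exactly `26k² − 12k + 1`, so `Φ X` needs that many clicks. All weights of periodic
patterns are computed by counting residues mod 6.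
-/

open Finset

section Coset

variable {V : Type*} [Fintype V]

lemma hammingWeight_eq_sum (x : V → ZMod 2) :
    hammingWeight x = ∑ v, if x v = 1 then 1 else 0 :=
  card_filter _ _

theorem hammingWeight_coset_sum_le (x a b : V → ZMod 2) :
    hammingWeight x + hammingWeight (x + a) + hammingWeight (x + b) +
        hammingWeight (x + (a + b)) ≤
      2 * (Fintype.card V + #{v | a v = 0 ∧ b v = 0}) := by
  have key : ∀ x a b : ZMod 2,
      (if x = 1 then 1 else 0) + (if x + a = 1 then 1 else 0) + (if x + b = 1 then 1 else 0) +
        (if x + (a + b) = 1 then 1 else 0) ≤ 2 * (1 + if a = 0 ∧ b = 0 then 1 else 0) := by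
    decide
  simp only [hammingWeight_eq_sum, card_filter, ← sum_add_distrib, Fintype.card_eq_sum_ones,
    mul_sum]
  exact sum_le_sum fun v _ => key (x v) (a v) (b v)

theorem exists_two_mul_hammingWeight_add_le (x : V → ZMod 2)
    {K : Submodule (ZMod 2) (V → ZMod 2)} {a b : V → ZMod 2} (ha : a ∈ K) (hb : b ∈ K) :
    ∃ c ∈ K, 2 * hammingWeight (x + c) ≤ Fintype.card V + #{v | a v = 0 ∧ b v = 0} := by
  by_contra! h
  have hsum := hammingWeight_coset_sum_le x a b
  have h₀ := h 0 K.zero_mem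
  rw [add_zero] at h₀
  have hA := h a ha
  have hB := h b hb
  have hAB := h (a + b) (K.add_mem ha hb)
  omega

end Coset

theorem Submodule.eq_span_pair_of_finrank_eq_two {F V : Type*} [Field F] [AddCommGroup V]
    [Module F V] [FiniteDimensional F V] {K : Submodule F V} (hK : Module.finrank F K = 2)
    {a b : V} (ha : a ∈ K) (hb : b ∈ K) (hab : LinearIndependent F ![a, b]) :
    K = span F {a, b} := by
  refine (eq_of_le_of_finrank_eq (span_le.2 ?_) ?_).symm
  · rintro _ (rfl | rfl | _) <;> assumption
  · rw [hK, ← Matrix.range_cons_cons_empty, finrank_span_eq_card hab, Fintype.card_fin]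

/-- The Lights Out map of the Cayley graph of `R × R` with generators `(±1, 0), (0, ±1)`: the
infinite grid for `R = ℤ`, the `m × m` torus for `R = ZMod m` (`m ≥ 3`). -/
def crossSum {R M : Type*} [Ring R] [AddCommMonoid M] (X : R × R → M) (q : R × R) : M :=
  X q + X (q.1 + 1, q.2) + X (q.1 - 1, q.2) + X (q.1, q.2 + 1) + X (q.1, q.2 - 1)

lemma crossSum_comp_prodMap {R S M : Type*} [Ring R] [Ring S] [AddCommMonoid M] (f : R →+* S)
    (X : S × S → M) (q : R × R) :
    crossSum (X ∘ Prod.map f f) q = crossSum X (Prod.map f f q) := by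
  simp [crossSum, map_add, map_sub, map_one]

def gridToPlane (n : ℕ) (v : Fin n × Fin n) : ℤ × ℤ := ((v.1 : ℤ), (v.2 : ℤ))

lemma gridToPlane_injective (n : ℕ) : Function.Injective (gridToPlane n) := by
  rintro ⟨i, j⟩ ⟨i', j'⟩ h
  simp only [gridToPlane, Prod.mk.injEq, Nat.cast_inj, Fin.val_inj] at h
  rw [h.1, h.2]

theorem lightsOut_gridGraph_comp_gridToPlane (n : ℕ) (X : ℤ × ℤ → ZMod 2)
    (hX : ∀ q : ℤ × ℤ, q.1 = -1 ∨ q.1 = n ∨ q.2 = -1 ∨ q.2 = n → X q = 0)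
    (v : Fin n × Fin n) :
    lightsOut (gridGraph n) (X ∘ gridToPlane n) v = crossSum X (gridToPlane n v) := by
  rcases hv : gridToPlane n v with ⟨a, b⟩
  simp only [gridToPlane, Prod.ext_iff] at hv
  set T : Finset (ℤ × ℤ) := {(a + 1, b), (a - 1, b), (a, b + 1), (a, b - 1)}
  have hN : (gridGraph n).neighborFinset v = T.preimage _ (gridToPlane_injective n).injOn := by
    ext u
    rw [SimpleGraph.mem_neighborFinset, mem_preimage]
    simp only [T, mem_insert, mem_singleton, gridToPlane, Prod.ext_iff, gridGraph, Fin.ext_iff]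
    omega
  have hout : ∀ q ∈ T, q ∉ Set.range (gridToPlane n) → X q = 0 := by
    intro q hq hrange
    apply hX
    by_contra! h
    simp only [T, mem_insert, mem_singleton, Prod.ext_iff] at hq
    refine hrange ⟨(⟨q.1.toNat, ?_⟩, ⟨q.2.toNat, ?_⟩), ?_⟩
    · omega
    · omega
    · simp only [gridToPlane, Prod.ext_iff]; omega
  change X (gridToPlane n v) + ∑ u ∈ (gridGraph n).neighborFinset v, X (gridToPlane n u) = _
  rw [hN, sum_preimage _ _ _ X hout, sum_insert, sum_insert, sum_insert, sum_singleton]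
  · simp only [crossSum, gridToPlane, hv, add_assoc]
  all_goals simp only [mem_insert, mem_singleton, Prod.ext_iff]; omega

def gridToTorus (n m : ℕ) : Fin n × Fin n → ZMod m × ZMod m :=
  Prod.map (↑) (↑) ∘ gridToPlane n

lemma gridToTorus_apply (n m : ℕ) (v : Fin n × Fin n) :
    gridToTorus n m v = (((v.1 : ℕ) : ZMod m), ((v.2 : ℕ) : ZMod m)) := by
  simp [gridToTorus, gridToPlane]

def periodicPattern (n m : ℕ) :
    (ZMod m × ZMod m → ZMod 2) →ₗ[ZMod 2] Fin n × Fin n → ZMod 2 :=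
  LinearMap.funLeft _ _ (gridToTorus n m)

/-- When `p` vanishes on row and column `-1` and `n ≡ -1 (mod m)`, the neighbours missing at the
border of the grid would only have carried zeros, so the grid looks like the torus. -/
theorem lightsOut_periodicPattern {n m : ℕ} (hn : (n : ZMod m) = -1)
    (p : ZMod m × ZMod m → ZMod 2) (hp : ∀ a, p (-1, a) = 0 ∧ p (a, -1) = 0) :
    lightsOut (gridGraph n) (periodicPattern n m p) = periodicPattern n m (crossSum p) := by
  funext v
  have hX : ∀ q : ℤ × ℤ, q.1 = -1 ∨ q.1 = n ∨ q.2 = -1 ∨ q.2 = n →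
      (p ∘ Prod.map (Int.castRingHom (ZMod m)) (Int.castRingHom (ZMod m))) q = 0 := by
    rintro ⟨a, b⟩ (rfl | rfl | rfl | rfl) <;> simp [hn, hp]
  exact (lightsOut_gridGraph_comp_gridToPlane n _ hX v).trans (crossSum_comp_prodMap _ p _)

lemma Fin.card_filter_val_eq_count (n : ℕ) (P : ℕ → Prop) [DecidablePred P] :
    #{i : Fin n | P i} = Nat.count P n := by
  rw [Nat.count_eq_card_filter_range, ← Nat.Iio_eq_range, ← Fin.map_valEmbedding_univ,
    filter_map, card_map]
  rfl

lemma ZMod.val_lt_sub_one_iff {m : ℕ} [NeZero m] (a : ZMod m) : a.val < m - 1 ↔ a ≠ -1 := by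
  obtain ⟨m, rfl⟩ : ∃ m', m = m' + 1 := Nat.exists_eq_succ_of_ne_zero (NeZero.ne m)
  rw [Ne, ← ZMod.val_injective _ |>.eq_iff, ZMod.val_neg_one]
  have := ZMod.val_lt a
  omega

theorem card_filter_natCast_eq {m n k : ℕ} [NeZero m] (hn : n + 1 = m * (k + 1))
    (a : ZMod m) :
    #{i : Fin n | ((i : ℕ) : ZMod m) = a} = k + if a ≠ -1 then 1 else 0 := by
  have hm := NeZero.pos m
  obtain ⟨hdiv, hmod⟩ := (Nat.div_mod_unique hm).2
    (⟨by rw [Nat.mul_succ] at hn; omega, by omega⟩ : m - 1 + m * k = n ∧ m - 1 < m)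
  have hcast : ∀ i : ℕ, (i : ZMod m) = a ↔ i ≡ a.val [MOD m] := fun i => by
    rw [← ZMod.natCast_eq_natCast_iff, ZMod.natCast_zmod_val]
  simp_rw [hcast]
  rw [Fin.card_filter_val_eq_count n (· ≡ a.val [MOD m]), Nat.count_modEq_card _ hm, hdiv, hmod,
    Nat.mod_eq_of_lt (ZMod.val_lt a)]
  simp only [ZMod.val_lt_sub_one_iff]

theorem card_filter_gridToTorus {m n k : ℕ} [NeZero m] (hn : n + 1 = m * (k + 1))
    (P : ZMod m × ZMod m → Prop) [DecidablePred P] :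
    #{v | P (gridToTorus n m v)} =
      #{q | P q} * k ^ 2 + (#{q | P q ∧ q.1 ≠ -1} + #{q | P q ∧ q.2 ≠ -1}) * k +
        #{q | P q ∧ q.1 ≠ -1 ∧ q.2 ≠ -1} := by
  have hfiber : ∀ q ∈ ({q | P q} : Finset _),
      #{v ∈ {v | P (gridToTorus n m v)} | gridToTorus n m v = q} =
        #{i : Fin n | ((i : ℕ) : ZMod m) = q.1} * #{j : Fin n | ((j : ℕ) : ZMod m) = q.2} := by
    intro q hq
    obtain ⟨-, hq⟩ := mem_filter.1 hq
    rw [← card_product, ← filter_product, univ_product_univ, filter_filter]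
    congr 1
    ext v
    simp only [mem_filter, mem_univ, true_and, gridToTorus_apply, Prod.ext_iff]
    exact and_iff_right_of_imp fun h => by rw [h.1, h.2]; exact hq
  rw [card_eq_sum_card_fiberwise (t := {q | P q}) (fun v hv => by simpa using hv),
    sum_congr rfl hfiber]
  simp only [card_filter_natCast_eq hn, sum_filter, card_filter, sum_mul, ← sum_add_distrib]
  refine sum_congr rfl fun q _ => ?_
  split_ifs <;> simp_all <;> ring

def quietPattern₁ : ZMod 6 × ZMod 6 → ZMod 2 := fun q =>
  !![1, 0, 1, 0, 1, 0;
     1, 0, 1, 0, 1, 0;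
     0, 0, 0, 0, 0, 0;
     1, 0, 1, 0, 1, 0;
     1, 0, 1, 0, 1, 0;
     0, 0, 0, 0, 0, 0] q.1 q.2

def quietPattern₂ : ZMod 6 × ZMod 6 → ZMod 2 := fun q => quietPattern₁ q.swap

def heavyPattern : ZMod 6 × ZMod 6 → ZMod 2 := fun q =>
  !![1, 1, 0, 1, 1, 1;
     1, 1, 1, 1, 0, 1;
     0, 1, 1, 1, 0, 1;
     1, 1, 1, 1, 0, 1;
     0, 0, 0, 0, 0, 1;
     1, 1, 1, 1, 1, 1] q.1 q.2

lemma crossSum_quietPattern₁ : crossSum quietPattern₁ = 0 := by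
  funext q; revert q; decide

lemma crossSum_quietPattern₂ : crossSum quietPattern₂ = 0 := by
  funext q; revert q; decide

lemma quietPattern₁_border : ∀ a, quietPattern₁ (-1, a) = 0 ∧ quietPattern₁ (a, -1) = 0 := by
  decide

lemma quietPattern₂_border : ∀ a, quietPattern₂ (-1, a) = 0 ∧ quietPattern₂ (a, -1) = 0 := by
  decide

lemma natCast_six_mul_add_five (k : ℕ) : ((6 * k + 5 : ℕ) : ZMod 6) = -1 := by
  push_cast
  rw [show (6 : ZMod 6) = 0 from rfl, zero_mul, zero_add]
  rfl

lemma quietPattern₁_mem_ker (k : ℕ) :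
    periodicPattern (6 * k + 5) 6 quietPattern₁ ∈
      LinearMap.ker (lightsOut (gridGraph (6 * k + 5))) := by
  rw [LinearMap.mem_ker, lightsOut_periodicPattern (natCast_six_mul_add_five k) _
    quietPattern₁_border, crossSum_quietPattern₁, map_zero]

lemma quietPattern₂_mem_ker (k : ℕ) :
    periodicPattern (6 * k + 5) 6 quietPattern₂ ∈
      LinearMap.ker (lightsOut (gridGraph (6 * k + 5))) := by
  rw [LinearMap.mem_ker, lightsOut_periodicPattern (natCast_six_mul_add_five k) _
    quietPattern₂_border, crossSum_quietPattern₂, map_zero]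

lemma linearIndependent_periodicPattern_quietPatterns (k : ℕ) :
    LinearIndependent (ZMod 2) ![periodicPattern (6 * k + 5) 6 quietPattern₁,
      periodicPattern (6 * k + 5) 6 quietPattern₂] := by
  rw [LinearIndependent.pair_iff]
  intro s t hst
  have h₀ := congrFun hst (⟨0, by omega⟩, ⟨0, by omega⟩)
  have h₁ := congrFun hst (⟨1, by omega⟩, ⟨0, by omega⟩)
  have e₀ : quietPattern₁ (0, 0) = 1 ∧ quietPattern₂ (0, 0) = 1 := by decide
  have e₁ : quietPattern₁ (1, 0) = 1 ∧ quietPattern₂ (1, 0) = 0 := by decide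
  simp only [Pi.add_apply, Pi.smul_apply, periodicPattern, LinearMap.funLeft_apply,
    gridToTorus_apply, Nat.cast_zero, Nat.cast_one, Pi.zero_apply, smul_eq_mul, e₀, e₁, mul_one,
    mul_zero, add_zero] at h₀ h₁
  exact ⟨h₁, by simpa [h₁] using h₀⟩

theorem ker_lightsOut_eq_span_quietPatterns {k : ℕ} (hd : gridNullity (6 * k + 5) = 2) :
    LinearMap.ker (lightsOut (gridGraph (6 * k + 5))) = Submodule.span (ZMod 2)
      {periodicPattern (6 * k + 5) 6 quietPattern₁, periodicPattern (6 * k + 5) 6 quietPattern₂} :=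
  Submodule.eq_span_pair_of_finrank_eq_two hd (quietPattern₁_mem_ker k) (quietPattern₂_mem_ker k)
    (linearIndependent_periodicPattern_quietPatterns k)

lemma card_commonZeros_quietPatterns (k : ℕ) :
    #{v | periodicPattern (6 * k + 5) 6 quietPattern₁ v = 0 ∧
      periodicPattern (6 * k + 5) 6 quietPattern₂ v = 0} = 16 * k ^ 2 + 20 * k + 5 := by
  obtain ⟨h₀, h₁, h₂, h₃⟩ :
      #{q | quietPattern₁ q = 0 ∧ quietPattern₂ q = 0} = 16 ∧
      #{q | (quietPattern₁ q = 0 ∧ quietPattern₂ q = 0) ∧ q.1 ≠ -1} = 10 ∧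
      #{q | (quietPattern₁ q = 0 ∧ quietPattern₂ q = 0) ∧ q.2 ≠ -1} = 10 ∧
      #{q | (quietPattern₁ q = 0 ∧ quietPattern₂ q = 0) ∧ q.1 ≠ -1 ∧ q.2 ≠ -1} = 5 := by
    decide
  refine (card_filter_gridToTorus (k := k)
    (P := fun q => quietPattern₁ q = 0 ∧ quietPattern₂ q = 0) (by ring)).trans ?_
  rw [h₀, h₁, h₂, h₃]

lemma hammingWeight_heavyPattern_add (k : ℕ) (s t : ZMod 2) :
    hammingWeight
        (periodicPattern (6 * k + 5) 6 (heavyPattern + s • quietPattern₁ + t • quietPattern₂)) =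
      26 * k ^ 2 + 40 * k + 15 := by
  have hcounts : ∀ s t : ZMod 2,
      #{q | (heavyPattern + s • quietPattern₁ + t • quietPattern₂) q = 1} = 26 ∧
      #{q | (heavyPattern + s • quietPattern₁ + t • quietPattern₂) q = 1 ∧ q.1 ≠ -1} = 20 ∧
      #{q | (heavyPattern + s • quietPattern₁ + t • quietPattern₂) q = 1 ∧ q.2 ≠ -1} = 20 ∧
      #{q | (heavyPattern + s • quietPattern₁ + t • quietPattern₂) q = 1 ∧ q.1 ≠ -1 ∧
        q.2 ≠ -1} = 15 := by
    decide
  obtain ⟨h₀, h₁, h₂, h₃⟩ := hcounts s t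
  refine (card_filter_gridToTorus (k := k)
    (P := fun q => (heavyPattern + s • quietPattern₁ + t • quietPattern₂) q = 1) (by ring)).trans ?_
  rw [h₀, h₁, h₂, h₃]

/-- For `k ≥ 1`, if the `(6k − 1) × (6k − 1)` grid has nullity exactly 2, then the answer
to the Most Clicks Problem is exactly `26k² − 12k + 1`: every solvable configuration has a
solution of weight at most this value, and some solvable configuration requires it. -/
theorem mcp_nullity_two (k : ℕ) (hk : 1 ≤ k)
    (hd : gridNullity (6 * k - 1) = 2) :
    (∀ b ∈ LinearMap.range (lightsOut (gridGraph (6 * k - 1))),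
      ∃ x, lightsOut (gridGraph (6 * k - 1)) x = b ∧
        hammingWeight x ≤ 26 * k ^ 2 - 12 * k + 1) ∧
    (∃ b ∈ LinearMap.range (lightsOut (gridGraph (6 * k - 1))),
      ∀ x, lightsOut (gridGraph (6 * k - 1)) x = b →
        26 * k ^ 2 - 12 * k + 1 ≤ hammingWeight x) := by
  obtain ⟨k, rfl⟩ : ∃ j, k = j + 1 := ⟨k - 1, by omega⟩
  rw [show 6 * (k + 1) - 1 = 6 * k + 5 by omega] at hd ⊢
  rw [show 26 * (k + 1) ^ 2 - 12 * (k + 1) + 1 = 26 * k ^ 2 + 40 * k + 15 by ring_nf; omega]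
  refine ⟨?_, ?_⟩
  · rintro _ ⟨x, rfl⟩
    obtain ⟨c, hc, hw⟩ :=
      exists_two_mul_hammingWeight_add_le x (quietPattern₁_mem_ker k) (quietPattern₂_mem_ker k)
    refine ⟨x + c, by rw [map_add, LinearMap.mem_ker.1 hc, add_zero], ?_⟩
    rw [Fintype.card_prod, Fintype.card_fin, card_commonZeros_quietPatterns] at hw
    linarith
  · set X := periodicPattern (6 * k + 5) 6 heavyPattern
    refine ⟨_, ⟨X, rfl⟩, fun x hx => ?_⟩
    have hker : x - X ∈ LinearMap.ker (lightsOut (gridGraph (6 * k + 5))) := by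
      rw [LinearMap.mem_ker, map_sub, hx, sub_self]
    rw [ker_lightsOut_eq_span_quietPatterns hd, Submodule.mem_span_pair] at hker
    obtain ⟨s, t, hst⟩ := hker
    rw [← hammingWeight_heavyPattern_add k s t, map_add, map_add, map_smul, map_smul, add_assoc,
      hst, add_sub_cancel]
end
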